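/- Let D be a domain of linear orders that is connected with two distinct neighbours, and let a, b be alternatives such that r_1(P) = a and r_1(P') = b for some adjacent P, P' ∈ D. Then there exist preferences P̄, P̂ ∈ D such that r_1(P̄) ∉ {a,b}, r_1(P̂) ∉ {a,b}, a P̄ b, and b P̂ a (the disagreement property). -/
import Mathlib


open Relation

/-- A preference is a ranking: a bijection from alternatives to ranks (0 = best). -/
abbrev Pref (A : Type*) [Fintype A] := A ≃ Fin (Fintype.card A)

namespace Pref

variable {A : Type*} [Fintype A]

/-- The rank (as a natural number, 0 = best) of alternative `a` in preference `P`. -/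
def rk (P : Pref A) (a : A) : ℕ := (P a : ℕ)

/-- The top-ranked alternative of `P`. -/
noncomputable def top [Nonempty A] (P : Pref A) : A := P.symm ⟨0, Fintype.card_pos⟩

/-- `a` is strictly preferred to `b` under `P`. -/
def SPrefers (P : Pref A) (a b : A) : Prop := rk P a < rk P b

/-- Two preferences are adjacent if they differ by one swap of consecutively
ranked alternatives. -/
def Adjacent (P P' : Pref A) : Prop :=
  ∃ a b : A, rk P a = rk P b + 1 ∧ rk P' a = rk P b ∧ rk P' b = rk P a ∧
    ∀ c : A, c ≠ a → c ≠ b → rk P c = rk P' c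

end Pref

open Pref

variable {A : Type*} [Fintype A] [Nonempty A]

/-- One step between members of the domain `D` along adjacent preferences. -/
def StepRel (D : Set (Pref A)) (P Q : Pref A) : Prop := P ∈ D ∧ Q ∈ D ∧ Adjacent P Q

/-- The domain `D` is connected: any two members are joined by a path of
adjacent preferences inside `D`. -/
def DConnected (D : Set (Pref A)) : Prop :=
  ∀ P ∈ D, ∀ Q ∈ D, ReflTransGen (StepRel D) P Q

/-- One step inside `D` along adjacent preferences keeping the same top. -/
def TStepRel (D : Set (Pref A)) (P Q : Pref A) : Prop :=
  StepRel D P Q ∧ Pref.top P = Pref.top Q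

/-- The top-connected closure of `P` in `D`. -/
def TCC (D : Set (Pref A)) (P : Pref A) : Set (Pref A) :=
  {Q | ReflTransGen (TStepRel D) P Q}

/-- Neighbours of a subset `S` inside the domain `D`. -/
def Nbr (D S : Set (Pref A)) : Set (Pref A) :=
  {Q | Q ∈ D ∧ Q ∉ S ∧ ∃ P ∈ S, Adjacent P Q}

/-- `D` is connected with two distinct neighbours. -/
def CDN (D : Set (Pref A)) : Prop :=
  DConnected D ∧
    ∀ P ∈ D, ∃ Q ∈ Nbr D (TCC D P), ∃ R ∈ Nbr D (TCC D P), Pref.top Q ≠ Pref.top R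

/-- Every alternative is top-ranked in some preference of `D`. -/
def MinimallyRich (D : Set (Pref A)) : Prop := ∀ a : A, ∃ P ∈ D, Pref.top P = a

/-- The edge relation of the induced graph `G(D)` on alternatives. -/
def EdgeD (D : Set (Pref A)) (a b : A) : Prop :=
  ∃ P ∈ D, ∃ P' ∈ D, Adjacent P P' ∧
    Pref.top P = a ∧ Pref.top P' = b ∧ rk P b = 1 ∧ rk P' a = 1

/-- `v 0, v 1, …, v (k-1)` is a path in the induced graph `G(D)`. -/
def IsPathD (D : Set (Pref A)) (k : ℕ) (v : ℕ → A) : Prop :=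
  (∀ i j, i < k → j < k → v i = v j → i = j) ∧
    ∀ i, i + 1 < k → EdgeD D (v i) (v (i + 1))

/-- Connected component of `P` in `D`. -/
def Component (D : Set (Pref A)) (P : Pref A) : Set (Pref A) :=
  {Q | Q ∈ D ∧ ReflTransGen (StepRel D) P Q}

section SCF

variable {n : ℕ} (D : Set (Pref A))

/-- Unanimity. -/
def Unanimous (f : (Fin n → D) → A) : Prop :=
  ∀ (P : Fin n → D) (a : A), (∀ i, Pref.top (P i : Pref A) = a) → f P = a

/-- Local strategy-proofness. -/
def LocallySP (f : (Fin n → D) → A) : Prop :=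
  ∀ (P : Fin n → D) (i : Fin n) (Q : D), Adjacent (P i : Pref A) (Q : Pref A) →
    ¬ SPrefers (P i : Pref A) (f (Function.update P i Q)) (f P)

/-- (Global) strategy-proofness. -/
def StrategyProof (f : (Fin n → D) → A) : Prop :=
  ∀ (P : Fin n → D) (i : Fin n) (Q : D),
    ¬ SPrefers (P i : Pref A) (f (Function.update P i Q)) (f P)

/-- Tops-onlyness. -/
def TopsOnly (f : (Fin n → D) → A) : Prop :=
  ∀ P P' : Fin n → D,
    (∀ i, Pref.top (P i : Pref A) = Pref.top (P' i : Pref A)) → f P = f P'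

/-- Dictatorship. -/
def Dictatorial (f : (Fin n → D) → A) : Prop :=
  ∃ i : Fin n, ∀ P : Fin n → D, f P = Pref.top (P i : Pref A)

/-- Voter `i` is decisive over `a`. -/
def Decisive (f : (Fin n → D) → A) (i : Fin n) (a : A) : Prop :=
  ∀ P : Fin n → D, Pref.top (P i : Pref A) = a → f P = a

end SCF

private lemma rk_top_eq_zero {A : Type*} [Fintype A] [Nonempty A] (P : Pref A) :
    Pref.rk P (Pref.top P) = 0 := by
  simp [Pref.rk, Pref.top]

private lemma rk_inj {A : Type*} [Fintype A] (P : Pref A) {c d : A}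
    (h : Pref.rk P c = Pref.rk P d) : c = d :=
  P.injective (Fin.ext h)

private lemma eq_top_of_rk_zero {A : Type*} [Fintype A] [Nonempty A] (P : Pref A) {c : A}
    (h : Pref.rk P c = 0) : c = Pref.top P :=
  rk_inj P (by rw [h, rk_top_eq_zero])

private lemma rk_eq_one_of_adj {A : Type*} [Fintype A] [Nonempty A] {R Q : Pref A}
    (h : Pref.Adjacent R Q) (hne : Pref.top R ≠ Pref.top Q) :
    Pref.rk Q (Pref.top R) = 1 := by
  obtain ⟨x, y, h1, h2, h3, h4⟩ := h
  by_cases hx : Pref.top R = x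
  · subst hx; rw [rk_top_eq_zero] at h1; omega
  by_cases hy : Pref.top R = y
  · subst hy; rw [h3, h1, rk_top_eq_zero]
  · exfalso
    have hc := h4 _ hx hy
    exact hne (eq_top_of_rk_zero Q (by rw [← hc, rk_top_eq_zero]))

private lemma tcc_mem_D {A : Type*} [Fintype A] [Nonempty A] {D : Set (Pref A)} {P Q : Pref A}
    (hP : P ∈ D) (h : Q ∈ TCC D P) : Q ∈ D := by
  induction h with
  | refl => exact hP
  | tail _ hstep _ => exact hstep.1.2.1

private lemma tcc_top {A : Type*} [Fintype A] [Nonempty A] {D : Set (Pref A)} {P Q : Pref A}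
    (h : Q ∈ TCC D P) : Pref.top Q = Pref.top P := by
  induction h with
  | refl => rfl
  | tail _ hstep ih => rw [← hstep.2]; exact ih

private lemma nbr_prop {A : Type*} [Fintype A] [Nonempty A] {D : Set (Pref A)} {P X : Pref A}
    (hP : P ∈ D) (hX : X ∈ Nbr D (TCC D P)) :
    X ∈ D ∧ Pref.top X ≠ Pref.top P ∧ Pref.rk X (Pref.top P) = 1 := by
  obtain ⟨hXD, hXn, S, hS, hadj⟩ := hX
  have hSD : S ∈ D := tcc_mem_D hP hS
  have hStop : Pref.top S = Pref.top P := tcc_top hS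
  have hne : Pref.top S ≠ Pref.top X := by
    intro heq
    exact hXn (ReflTransGen.tail hS ⟨⟨hSD, hXD, hadj⟩, heq⟩)
  refine ⟨hXD, fun h => hne (hStop.trans h.symm), ?_⟩
  rw [← hStop]
  exact rk_eq_one_of_adj hadj hne

/-- Remark 7: a domain connected with two distinct neighbours satisfies the
disagreement property. -/
theorem stmt19 {A : Type*} [Fintype A] [Nonempty A] (hA : 3 ≤ Fintype.card A)
    (D : Set (Pref A)) (hcdn : CDN D)
    (a b : A) (hab : a ≠ b) (P P' : Pref A) (hP : P ∈ D) (hP' : P' ∈ D)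
    (hadj : Pref.Adjacent P P') (ha : Pref.top P = a) (hb : Pref.top P' = b) :
    ∃ Pbar ∈ D, ∃ Phat ∈ D,
      Pref.top Pbar ≠ a ∧ Pref.top Pbar ≠ b ∧
      Pref.top Phat ≠ a ∧ Pref.top Phat ≠ b ∧
      Pref.SPrefers Pbar a b ∧ Pref.SPrefers Phat b a := by
  obtain ⟨hconn, hcdn2⟩ := hcdn
  obtain ⟨Q1, hQ1, R1, hR1, hQR1⟩ := hcdn2 P hP
  obtain ⟨Q2, hQ2, R2, hR2, hQR2⟩ := hcdn2 P' hP'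
  have p1 := nbr_prop hP hQ1
  have p2 := nbr_prop hP hR1
  have p3 := nbr_prop hP' hQ2
  have p4 := nbr_prop hP' hR2
  rw [ha] at p1 p2
  rw [hb] at p3 p4
  have pick1 : ∃ X, X ∈ D ∧ Pref.top X ≠ a ∧ Pref.top X ≠ b ∧ Pref.rk X a = 1 := by
    by_cases h : Pref.top Q1 = b
    · exact ⟨R1, p2.1, p2.2.1, fun hc => hQR1 (h.trans hc.symm), p2.2.2⟩
    · exact ⟨Q1, p1.1, p1.2.1, h, p1.2.2⟩
  have pick2 : ∃ X, X ∈ D ∧ Pref.top X ≠ a ∧ Pref.top X ≠ b ∧ Pref.rk X b = 1 := by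
    by_cases h : Pref.top Q2 = a
    · exact ⟨R2, p4.1, fun hc => hQR2 (h.trans hc.symm), p4.2.1, p4.2.2⟩
    · exact ⟨Q2, p3.1, h, p3.2.1, p3.2.2⟩
  obtain ⟨Pbar, hb1, hb2, hb3, hb4⟩ := pick1
  obtain ⟨Phat, hh1, hh2, hh3, hh4⟩ := pick2
  refine ⟨Pbar, hb1, Phat, hh1, hb2, hb3, hh2, hh3, ?_, ?_⟩
  · have h0 : Pref.rk Pbar b ≠ 0 := fun h => hb3 (eq_top_of_rk_zero Pbar h).symm
    have h1 : Pref.rk Pbar b ≠ 1 := fun h => hab (rk_inj Pbar (hb4.trans h.symm))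
    unfold Pref.SPrefers
    omega
  · have h0 : Pref.rk Phat a ≠ 0 := fun h => hh2 (eq_top_of_rk_zero Phat h).symm
    have h1 : Pref.rk Phat a ≠ 1 := fun h => hab.symm (rk_inj Phat (hh4.trans h.symm))
    unfold Pref.SPrefers
    omega
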